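/- arXiv:2405.01404 — 2 statements merged into one kernel-verified Lean document; each statement's English description precedes it below -/
import Mathlib

section
/- Polar parameterisation theorem: for any bounded set A ⊂ ℝ^M and reference vector η ∈ ℝ^M such that the truncated interpolated weak Pareto front Y*_η[A] is nonempty, Y*_η[A] = {η + (sup_{a ∈ A} s_{η,λ}(a)) λ : λ ∈ S^{M−1}_+}, where s_{η,λ}(a) = min_m max(a^(m) − η^(m), 0)/λ^(m). -/
/-- The length scalarisation function `s_{η,λ}(y) = min_m max(y^(m) - η^(m), 0) / λ^(m)`. -/
noncomputable def sLen {M : ℕ} (η lam y : EuclideanSpace ℝ (Fin M)) : ℝ :=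
  ⨅ m, max (y m - η m) 0 / lam m

/-- The positive part of the unit sphere `S^{M-1}_+`. -/
def Splus (M : ℕ) : Set (EuclideanSpace ℝ (Fin M)) :=
  {z | (∀ m, 0 < z m) ∧ ‖z‖ = 1}

/-- The weak Pareto domination region `D_⪯[A]` of a set `A`. -/
def weakDom {M : ℕ} (A : Set (EuclideanSpace ℝ (Fin M))) : Set (EuclideanSpace ℝ (Fin M)) :=
  {y | ∃ a ∈ A, ∀ m, y m ≤ a m}

/-- The truncated interpolated weak Pareto front `Y*_η[A]`: the points of `D_⪯[closure A]`
that are not strongly dominated by any point of `D_⪯[closure A]`, intersected with the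
region strictly dominating `η`. -/
def truncFront {M : ℕ} (η : EuclideanSpace ℝ (Fin M)) (A : Set (EuclideanSpace ℝ (Fin M))) :
    Set (EuclideanSpace ℝ (Fin M)) :=
  {y ∈ weakDom (closure A) | ∀ z ∈ weakDom (closure A), ¬ ∀ m, y m < z m} ∩
    {y | ∀ m, η m < y m}

/-!
On a ray `η + t • λ` with `t > 0` and `λ` positive, `η + t • λ ≤ y` holds iff `t ≤ s_{η,λ}(y)`,
and `η + t • λ < y` iff `t < s_{η,λ}(y)`. As `A` is bounded, `σ(λ) = sup_A s_{η,λ}` is the maximum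
of the continuous function `s_{η,λ}` over the compact set `closure A`. Hence the ray point lies in
`D_⪯[closure A]` iff `t ≤ σ(λ)` and is strongly dominated there iff `t < σ(λ)`: the ray meets the
front exactly at `t = σ(λ)`. Every point `y > η` lies on the ray through `(y - η) / ‖y - η‖`, and
`σ(λ) > 0` because some point of `closure A` lies strictly above `η`.
-/
open Set Bornology

theorem Bornology.IsBounded.isGreatest_image_closure_iSup {X : Type*} [PseudoMetricSpace X]
    [ProperSpace X] {A : Set X} (hA : IsBounded A) (hne : A.Nonempty) {f : X → ℝ}
    (hf : Continuous f) : IsGreatest (f '' closure A) (⨆ a : A, f a) := by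
  obtain ⟨g, hg⟩ := (hA.isCompact_closure.image hf).exists_isGreatest (hne.closure.image f)
  have hlub : IsLUB (f '' A) g := (isLUB_iff_of_subset_of_subset_closure
    (image_mono subset_closure) (image_closure_subset_closure_image hf)).2 hg.isLUB
  rwa [← sSup_image', hlub.csSup_eq (hne.image f)]

section sLen

variable {M : ℕ} [Nonempty (Fin M)] {η lam y : EuclideanSpace ℝ (Fin M)} {t : ℝ}

theorem le_sLen_iff (hlam : ∀ m, 0 < lam m) (ht : 0 < t) :
    t ≤ sLen η lam y ↔ ∀ m, η m + t * lam m ≤ y m := by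
  rw [sLen, le_ciInf_iff (finite_range _).bddBelow]
  refine forall_congr' fun m => ?_
  rw [le_div_iff₀ (hlam m), le_max_iff, le_sub_iff_add_le',
    or_iff_left (mul_pos ht (hlam m)).not_ge]

theorem lt_sLen_iff (hlam : ∀ m, 0 < lam m) (ht : 0 ≤ t) :
    t < sLen η lam y ↔ ∀ m, η m + t * lam m < y m := by
  obtain ⟨m₀, hm₀⟩ := exists_eq_ciInf_of_finite (f := fun m => max (y m - η m) 0 / lam m)
  have hlt : t < sLen η lam y ↔ ∀ m, t < max (y m - η m) 0 / lam m :=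
    ⟨fun h m => h.trans_le (ciInf_le (finite_range _).bddBelow m), fun h => (h m₀).trans_eq hm₀⟩
  rw [hlt]
  refine forall_congr' fun m => ?_
  rw [lt_div_iff₀ (hlam m), lt_max_iff, lt_sub_iff_add_lt',
    or_iff_left (mul_nonneg ht (hlam m).le).not_gt]

theorem continuous_sLen (η lam : EuclideanSpace ℝ (Fin M)) : Continuous (sLen η lam) := by
  have h : sLen η lam = fun y =>
      Finset.univ.inf' Finset.univ_nonempty (fun m => max (y m - η m) 0 / lam m) := by
    funext y
    rw [Finset.inf'_univ_eq_ciInf]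
    rfl
  rw [h]
  exact Continuous.finset_inf'_apply _ fun m _ =>
    (((EuclideanSpace.proj m).continuous.sub continuous_const).max continuous_const).div_const _

end sLen

section front

variable {M : ℕ} {η lam : EuclideanSpace ℝ (Fin M)} {A : Set (EuclideanSpace ℝ (Fin M))}

theorem forall_mem_weakDom_not_lt_iff {B : Set (EuclideanSpace ℝ (Fin M))}
    {y : EuclideanSpace ℝ (Fin M)} :
    (∀ z ∈ weakDom B, ¬ ∀ m, y m < z m) ↔ ∀ b ∈ B, ¬ ∀ m, y m < b m :=
  ⟨fun h b hb => h b ⟨b, hb, fun _ => le_rfl⟩,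
    fun h _ ⟨b, hb, hzb⟩ hyz => h b hb fun m => (hyz m).trans_le (hzb m)⟩

theorem Set.Nonempty.of_truncFront (hne : (truncFront η A).Nonempty) : A.Nonempty :=
  let ⟨_, ⟨⟨c, hc, _⟩, _⟩, _⟩ := hne
  closure_nonempty_iff.1 ⟨c, hc⟩

variable [Nonempty (Fin M)]

theorem add_smul_mem_truncFront_iff (hA : IsBounded A) (hAne : A.Nonempty)
    (hlam : ∀ m, 0 < lam m) {t : ℝ} (ht : 0 < t) :
    η + t • lam ∈ truncFront η A ↔ t = ⨆ a : A, sLen η lam a := by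
  obtain ⟨⟨c, hc, hcσ⟩, hσ⟩ := hA.isGreatest_image_closure_iSup hAne (continuous_sLen η lam)
  have hdom : η + t • lam ∈ weakDom (closure A) ↔ t ≤ ⨆ a : A, sLen η lam a :=
    ⟨fun ⟨d, hd, hle⟩ => ((le_sLen_iff hlam ht).2 hle).trans (hσ ⟨d, hd, rfl⟩),
      fun h => ⟨c, hc, (le_sLen_iff hlam ht).1 (h.trans_eq hcσ.symm)⟩⟩
  have hnd : (∀ z ∈ weakDom (closure A), ¬ ∀ m, (η + t • lam) m < z m) ↔
      (⨆ a : A, sLen η lam a) ≤ t := by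
    rw [forall_mem_weakDom_not_lt_iff, ← not_lt]
    exact ⟨fun h hlt => h c hc ((lt_sLen_iff hlam ht.le).1 (hlt.trans_eq hcσ.symm)),
      fun h d hd hlt => h (((lt_sLen_iff hlam ht.le).2 hlt).trans_le (hσ ⟨d, hd, rfl⟩))⟩
  have habove : ∀ m, η m < (η + t • lam) m := fun m =>
    lt_add_of_pos_right _ (mul_pos ht (hlam m))
  exact ⟨fun ⟨⟨h₁, h₂⟩, _⟩ => le_antisymm (hdom.1 h₁) (hnd.1 h₂),
    fun h => ⟨⟨hdom.2 h.le, hnd.2 h.ge⟩, habove⟩⟩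

theorem iSup_sLen_pos (hA : IsBounded A) (hne : (truncFront η A).Nonempty)
    (hlam : ∀ m, 0 < lam m) : 0 < ⨆ a : A, sLen η lam a := by
  obtain ⟨-, hσ⟩ := hA.isGreatest_image_closure_iSup hne.of_truncFront (continuous_sLen η lam)
  obtain ⟨y, ⟨⟨c, hc, hyc⟩, -⟩, hηy⟩ := hne
  calc 0 < sLen η lam c :=
        (lt_sLen_iff hlam le_rfl).2 fun m => by simpa using (hηy m).trans_le (hyc m)
    _ ≤ _ := hσ ⟨c, hc, rfl⟩

theorem exists_pos_smul_mem_Splus {v : EuclideanSpace ℝ (Fin M)} (hv : ∀ m, 0 < v m) :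
    ∃ t : ℝ, 0 < t ∧ ∃ lam ∈ Splus M, v = t • lam := by
  have hr : 0 < ‖v‖ := norm_pos_iff.2 fun h => (hv (Classical.arbitrary _)).ne' (by simp [h])
  refine ⟨‖v‖, hr, ‖v‖⁻¹ • v, ⟨fun m => mul_pos (inv_pos.2 hr) (hv m), ?_⟩, ?_⟩
  · rw [norm_smul, norm_inv, norm_norm, inv_mul_cancel₀ hr.ne']
  · rw [smul_smul, mul_inv_cancel₀ hr.ne', one_smul]

end front

/-- polar parameterisation: for any bounded set `A ⊂ ℝ^M` whose truncated
interpolated weak Pareto front is nonempty,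
`Y*_η[A] = {η + (sup_{a ∈ A} s_{η,λ}(a)) • λ : λ ∈ S^{M-1}_+}`. -/
theorem stmt6 (M : ℕ) (hM : 1 ≤ M) (η : EuclideanSpace ℝ (Fin M))
    (A : Set (EuclideanSpace ℝ (Fin M))) (hbdd : Bornology.IsBounded A)
    (hne : (truncFront η A).Nonempty) :
    truncFront η A = {y | ∃ lam ∈ Splus M, y = η + (⨆ a : A, sLen η lam a) • lam} := by
  have : Nonempty (Fin M) := ⟨⟨0, hM⟩⟩
  ext y
  constructor
  · intro hy
    obtain ⟨t, ht, lam, hlam, hyt⟩ :=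
      exists_pos_smul_mem_Splus (v := y - η) fun m => sub_pos.2 (hy.2 m)
    rw [sub_eq_iff_eq_add'] at hyt
    subst hyt
    exact ⟨lam, hlam, by rw [← (add_smul_mem_truncFront_iff hbdd hne.of_truncFront hlam.1 ht).1 hy]⟩
  · rintro ⟨lam, hlam, rfl⟩
    exact (add_smul_mem_truncFront_iff hbdd hne.of_truncFront hlam.1
      (iSup_sLen_pos hbdd hne hlam.1)).2 rfl
end

section
/- If A* and B* are Pareto front surfaces with reference η, then the truncated interpolated weak Pareto front of their union is the polar surface with projected lengths equal to the pointwise maximum: Y*_η[A* ∪ B*] = {η + max(ℓ_{η,λ}[A*], ℓ_{η,λ}[B*]) λ : λ ∈ S^{M−1}_+}. -/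
/-- `A` is a Pareto front surface with reference `η`: all its points strictly dominate
`η` componentwise, each positive ray from `η` meets `A` exactly once, and no point of
`A` strongly dominates another. -/
def IsParetoFrontSurface {M : ℕ} (η : EuclideanSpace ℝ (Fin M))
    (A : Set (EuclideanSpace ℝ (Fin M))) : Prop :=
  (∀ a ∈ A, ∀ m, η m < a m) ∧
  (∀ lam ∈ Splus M, ∃! t : ℝ, 0 < t ∧ η + t • lam ∈ A) ∧
  (∀ a ∈ A, ∀ b ∈ A, ¬ ∀ m, a m < b m)

/-- The projected length `ℓ_{η,λ}[A]`. -/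
noncomputable def projLen {M : ℕ} (η : EuclideanSpace ℝ (Fin M))
    (A : Set (EuclideanSpace ℝ (Fin M))) (lam : EuclideanSpace ℝ (Fin M)) : ℝ :=
  sSup {t : ℝ | 0 < t ∧ η + t • lam ∈ A}

/-!
On the ray from `η` in direction `λ`, the point at distance `ℓ = max ℓ_A(λ) ℓ_B(λ)` lies
in `A ∪ B`, so no point of the ray closer to `η` is weakly Pareto optimal for `A ∪ B`.
Conversely, strict domination of a point is an open condition, so, since no point of `A`
strictly dominates another, no point of `closure A` strictly dominates a point of `A`; as
`η + ℓ_A(λ) • λ ≤ η + ℓ • λ`, no point of `closure (A ∪ B)` strictly dominates `η + ℓ • λ`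
either. Hence the truncated front meets the ray exactly at distance `ℓ`.
-/

lemma add_smul_apply {M : ℕ} (η lam : EuclideanSpace ℝ (Fin M)) (t : ℝ) (m : Fin M) :
    (η + t • lam) m = η m + t * lam m := rfl

section Rays

variable {M : ℕ} {η lam : EuclideanSpace ℝ (Fin M)}

lemma add_smul_apply_lt_of_lt (hlam : ∀ m, 0 < lam m) {s t : ℝ} (hst : s < t) (m : Fin M) :
    (η + s • lam) m < (η + t • lam) m := by
  simpa only [add_smul_apply, add_lt_add_iff_left] using mul_lt_mul_of_pos_right hst (hlam m)

lemma add_smul_apply_le_of_le (hlam : ∀ m, 0 < lam m) {s t : ℝ} (hst : s ≤ t) (m : Fin M) :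
    (η + s • lam) m ≤ (η + t • lam) m := by
  simpa only [add_smul_apply, add_le_add_iff_left] using
    mul_le_mul_of_nonneg_right hst (hlam m).le

lemma inv_norm_smul_mem_Splus {v : EuclideanSpace ℝ (Fin M)} (hv : ∀ m, 0 < v m)
    (hv0 : v ≠ 0) : ‖v‖⁻¹ • v ∈ Splus M := by
  have hnorm : 0 < ‖v‖ := norm_pos_iff.mpr hv0
  refine ⟨fun m => mul_pos (inv_pos.mpr hnorm) (hv m), ?_⟩
  rw [norm_smul, norm_inv, norm_norm, inv_mul_cancel₀ hnorm.ne']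

end Rays

lemma isOpen_setOf_forall_lt {M : ℕ} (a : EuclideanSpace ℝ (Fin M)) :
    IsOpen {x : EuclideanSpace ℝ (Fin M) | ∀ m, a m < x m} := by
  simp only [Set.ofPred_forall]
  exact isOpen_iInter_of_finite fun m => isOpen_lt continuous_const (PiLp.continuous_apply 2 _ m)

lemma not_forall_lt_of_mem_closure {M : ℕ} {A : Set (EuclideanSpace ℝ (Fin M))}
    (hA : ∀ a ∈ A, ∀ b ∈ A, ¬ ∀ m, a m < b m) {a c : EuclideanSpace ℝ (Fin M)} (ha : a ∈ A)
    (hc : c ∈ closure A) : ¬ ∀ m, a m < c m := fun hac =>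
  let ⟨b, hb, hbA⟩ := mem_closure_iff.mp hc _ (isOpen_setOf_forall_lt a) hac
  hA a ha b hbA hb

lemma subset_weakDom {M : ℕ} (A : Set (EuclideanSpace ℝ (Fin M))) : A ⊆ weakDom A :=
  fun a ha => ⟨a, ha, fun _ => le_rfl⟩

namespace IsParetoFrontSurface

variable {M : ℕ} {η lam : EuclideanSpace ℝ (Fin M)} {A B : Set (EuclideanSpace ℝ (Fin M))}

lemma projLen_pos_and_mem (hA : IsParetoFrontSurface η A) (hlam : lam ∈ Splus M) :
    0 < projLen η A lam ∧ η + projLen η A lam • lam ∈ A := by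
  obtain ⟨t, ht, huniq⟩ := hA.2.1 lam hlam
  have hset : {s : ℝ | 0 < s ∧ η + s • lam ∈ A} = {t} :=
    Set.eq_singleton_iff_unique_mem.mpr ⟨ht, huniq⟩
  rwa [projLen, hset, csSup_singleton]

lemma max_projLen_pos_and_mem (hA : IsParetoFrontSurface η A)
    (hB : IsParetoFrontSurface η B) (hlam : lam ∈ Splus M) :
    0 < max (projLen η A lam) (projLen η B lam) ∧
      η + max (projLen η A lam) (projLen η B lam) • lam ∈ A ∪ B := by
  rcases max_choice (projLen η A lam) (projLen η B lam) with h | h <;> rw [h]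
  · exact (hA.projLen_pos_and_mem hlam).imp_right Or.inl
  · exact (hB.projLen_pos_and_mem hlam).imp_right Or.inr

lemma not_forall_add_max_projLen_smul_lt (hA : IsParetoFrontSurface η A)
    (hB : IsParetoFrontSurface η B) (hlam : lam ∈ Splus M) {c : EuclideanSpace ℝ (Fin M)}
    (hc : c ∈ closure (A ∪ B)) :
    ¬ ∀ m, (η + max (projLen η A lam) (projLen η B lam) • lam) m < c m := by
  intro hlt
  rw [closure_union] at hc
  rcases hc with hc | hc
  · refine not_forall_lt_of_mem_closure hA.2.2 (hA.projLen_pos_and_mem hlam).2 hc fun m => ?_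
    exact (add_smul_apply_le_of_le hlam.1 (le_max_left _ _) m).trans_lt (hlt m)
  · refine not_forall_lt_of_mem_closure hB.2.2 (hB.projLen_pos_and_mem hlam).2 hc fun m => ?_
    exact (add_smul_apply_le_of_le hlam.1 (le_max_right _ _) m).trans_lt (hlt m)

end IsParetoFrontSurface

theorem stmt8_general (M : ℕ) (η : EuclideanSpace ℝ (Fin M))
    (A B : Set (EuclideanSpace ℝ (Fin M)))
    (hA : IsParetoFrontSurface η A) (hB : IsParetoFrontSurface η B) :
    truncFront η (A ∪ B) =
      {y | ∃ lam ∈ Splus M, y = η + max (projLen η A lam) (projLen η B lam) • lam} := by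
  ext y
  constructor
  · rintro ⟨⟨hyDom, hmax⟩, hyη⟩
    have ⟨c, hc, hyc⟩ := hyDom
    have hne : y - η ≠ 0 := by
      rw [sub_ne_zero]
      rintro rfl
      exact hmax y hyDom hyη
    set lam := ‖y - η‖⁻¹ • (y - η)
    have hlam : lam ∈ Splus M := inv_norm_smul_mem_Splus (fun m => sub_pos.mpr (hyη m)) hne
    have hy : y = η + ‖y - η‖ • lam := by
      rw [smul_inv_smul₀ (norm_ne_zero_iff.mpr hne), add_sub_cancel]
    have hmem := (hA.max_projLen_pos_and_mem hB hlam).2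
    refine ⟨lam, hlam, hy.trans (congrArg (η + · • lam) (le_antisymm ?_ ?_))⟩
    · by_contra! h
      refine hA.not_forall_add_max_projLen_smul_lt hB hlam hc fun m => ?_
      exact (add_smul_apply_lt_of_lt hlam.1 h m).trans_le (hy ▸ hyc m)
    · by_contra! h
      refine hmax _ (subset_weakDom _ (subset_closure hmem)) fun m => ?_
      exact hy ▸ add_smul_apply_lt_of_lt hlam.1 h m
  · rintro ⟨lam, hlam, rfl⟩
    obtain ⟨hpos, hmem⟩ := hA.max_projLen_pos_and_mem hB hlam
    refine ⟨⟨subset_weakDom _ (subset_closure hmem), ?_⟩, fun m => ?_⟩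
    · rintro z ⟨c, hc, hzc⟩ hlt
      exact hA.not_forall_add_max_projLen_smul_lt hB hlam hc fun m => (hlt m).trans_le (hzc m)
    · simpa using add_smul_apply_lt_of_lt (η := η) hlam.1 hpos m

/-- union: the truncated interpolated weak Pareto front of the union of two
Pareto front surfaces is the polar surface whose projected lengths are the pointwise
maximum of the two projected length functions. -/
theorem stmt8 (M : ℕ) (hM : 1 ≤ M) (η : EuclideanSpace ℝ (Fin M))
    (A B : Set (EuclideanSpace ℝ (Fin M)))
    (hA : IsParetoFrontSurface η A) (hB : IsParetoFrontSurface η B) :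
    truncFront η (A ∪ B) =
      {y | ∃ lam ∈ Splus M, y = η + max (projLen η A lam) (projLen η B lam) • lam} :=
  stmt8_general M η A B hA hB
end
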